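/- arXiv:1505.03063 — 3 statements merged into one kernel-verified Lean document; each statement's English description precedes it below -/
import Mathlib

section
/- Under the standing assumptions on the 3-block Bregman ADMM, for every k ≥ 0 the function z ↦ L̂(x^{k+1}, y^{k+1}, z, p^{k+1}, z^k) is differentiable at z = z^{k+1} with gradient equal to ∇φ₃(z^k) − ∇φ₃(z^{k+1}) + Cᵀ(p^{k+1} − p^k) + 2σ₀(z^{k+1} − z^k); consequently the norm of this gradient is at most (ℓ₃ + 2σ₀)‖z^{k+1} − z^k‖ + ‖Cᵀ‖·‖p^{k+1} − p^k‖, where ‖Cᵀ‖ is the operator norm of Cᵀ. -/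
open RealInnerProductSpace Filter

noncomputable section

/-- Euclidean space `ℝ^n`. -/
abbrev Eu (n : ℕ) := EuclideanSpace ℝ (Fin n)

/-- The Bregman distance `Δ_φ(u,v) = φ(u) − φ(v) − ⟨∇φ(v), u−v⟩` associated with a
differentiable function `φ` whose gradient is `φ'`. -/
def Breg {n : ℕ} (φ : Eu n → ℝ) (φ' : Eu n → Eu n) (u v : Eu n) : ℝ :=
  φ u - φ v - ⟪φ' v, u - v⟫

/-- `F` is `μ`-strongly convex iff `F − (μ/2)‖·‖²` is convex. -/
def StrongConvex {n : ℕ} (μ : ℝ) (F : Eu n → ℝ) : Prop :=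
  ConvexOn ℝ Set.univ (fun u => F u - μ / 2 * ‖u‖ ^ 2)

/-- The augmented Lagrangian
`L_α(x,y,z,p) = f(x)+g(y)+h(z)+⟨p, Ax+By+Cz⟩+(α/2)‖Ax+By+Cz‖²`. -/
def Lag {n₁ n₂ n₃ m : ℕ} (f : Eu n₁ → ℝ) (g : Eu n₂ → ℝ) (h : Eu n₃ → ℝ)
    (A : Eu n₁ →L[ℝ] Eu m) (B : Eu n₂ →L[ℝ] Eu m) (C : Eu n₃ →L[ℝ] Eu m)
    (α : ℝ) (x : Eu n₁) (y : Eu n₂) (z : Eu n₃) (p : Eu m) : ℝ :=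
  f x + g y + h z + ⟪p, A x + B y + C z⟫ + α / 2 * ‖A x + B y + C z‖ ^ 2

/-- All the data and standing assumptions of the 3-block Bregman ADMM:
objective functions `f, g, h`, Bregman kernels `φ₁, φ₂, φ₃` (with gradients
`φ₁', φ₂', φ₃'`, and `h'` the gradient of `h`), matrices `A, B, C` (as linear maps),
parameters, iterate sequences `x, y, z, p`, and the standing hypotheses
(lower semicontinuity of `f, g`; differentiability with Lipschitz gradients;
convexity of kernels; the strong-convexity alternatives; quantitative full row rank
of `C`; the lower bound on `α`; and the BADMM update rules, where each of the three
primal updates is a global minimizer of the corresponding subproblem). -/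
structure BADMM (n₁ n₂ n₃ m : ℕ) where
  f : Eu n₁ → ℝ
  g : Eu n₂ → ℝ
  h : Eu n₃ → ℝ
  φ₁ : Eu n₁ → ℝ
  φ₂ : Eu n₂ → ℝ
  φ₃ : Eu n₃ → ℝ
  h' : Eu n₃ → Eu n₃
  φ₁' : Eu n₁ → Eu n₁
  φ₂' : Eu n₂ → Eu n₂
  φ₃' : Eu n₃ → Eu n₃
  A : Eu n₁ →L[ℝ] Eu m
  B : Eu n₂ →L[ℝ] Eu m
  C : Eu n₃ →L[ℝ] Eu m
  α : ℝ
  ℓh : ℝ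
  ℓ₁ : ℝ
  ℓ₂ : ℝ
  ℓ₃ : ℝ
  μ₁ : ℝ
  μ₂ : ℝ
  μ₃ : ℝ
  σC : ℝ
  x : ℕ → Eu n₁
  y : ℕ → Eu n₂
  z : ℕ → Eu n₃
  p : ℕ → Eu m
  hα_pos : 0 < α
  hf_lsc : LowerSemicontinuous f
  hg_lsc : LowerSemicontinuous g
  hgrad_h : ∀ v, HasGradientAt h (h' v) v
  hgrad_φ₁ : ∀ v, HasGradientAt φ₁ (φ₁' v) v
  hgrad_φ₂ : ∀ v, HasGradientAt φ₂ (φ₂' v) v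
  hgrad_φ₃ : ∀ v, HasGradientAt φ₃ (φ₃' v) v
  hℓh_nonneg : 0 ≤ ℓh
  hℓ₁_nonneg : 0 ≤ ℓ₁
  hℓ₂_nonneg : 0 ≤ ℓ₂
  hℓ₃_nonneg : 0 ≤ ℓ₃
  hlip_h : ∀ a b, ‖h' a - h' b‖ ≤ ℓh * ‖a - b‖
  hlip_φ₁ : ∀ a b, ‖φ₁' a - φ₁' b‖ ≤ ℓ₁ * ‖a - b‖
  hlip_φ₂ : ∀ a b, ‖φ₂' a - φ₂' b‖ ≤ ℓ₂ * ‖a - b‖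
  hlip_φ₃ : ∀ a b, ‖φ₃' a - φ₃' b‖ ≤ ℓ₃ * ‖a - b‖
  hφ₁_convex : ConvexOn ℝ Set.univ φ₁
  hφ₂_convex : ConvexOn ℝ Set.univ φ₂
  hφ₃_convex : ConvexOn ℝ Set.univ φ₃
  hμ₁_pos : 0 < μ₁
  hμ₂_pos : 0 < μ₂
  hμ₃_pos : 0 < μ₃
  hsc₁ : StrongConvex μ₁ f ∨ StrongConvex μ₁ φ₁
  hsc₂ : StrongConvex μ₂ g ∨ StrongConvex μ₂ φ₂
  hsc₃ : StrongConvex μ₃ h ∨ StrongConvex μ₃ φ₃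
  hσC_pos : 0 < σC
  hC_rank : ∀ u : Eu m, σC * ‖u‖ ^ 2 ≤ ‖(ContinuousLinearMap.adjoint C) u‖ ^ 2
  hα_large : 4 * ((ℓh + ℓ₃) ^ 2 + ℓ₃ ^ 2) / (μ₃ * σC) < α
  hx_min : ∀ k, ∀ ξ : Eu n₁,
    Lag f g h A B C α (x (k+1)) (y k) (z k) (p k) + Breg φ₁ φ₁' (x (k+1)) (x k) ≤
      Lag f g h A B C α ξ (y k) (z k) (p k) + Breg φ₁ φ₁' ξ (x k)
  hy_min : ∀ k, ∀ ξ : Eu n₂,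
    Lag f g h A B C α (x (k+1)) (y (k+1)) (z k) (p k) + Breg φ₂ φ₂' (y (k+1)) (y k) ≤
      Lag f g h A B C α (x (k+1)) ξ (z k) (p k) + Breg φ₂ φ₂' ξ (y k)
  hz_min : ∀ k, ∀ ξ : Eu n₃,
    Lag f g h A B C α (x (k+1)) (y (k+1)) (z (k+1)) (p k) + Breg φ₃ φ₃' (z (k+1)) (z k) ≤
      Lag f g h A B C α (x (k+1)) (y (k+1)) ξ (p k) + Breg φ₃ φ₃' ξ (z k)
  hp_upd : ∀ k, p (k+1) = p k + α • (A (x (k+1)) + B (y (k+1)) + C (z (k+1)))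

namespace BADMM

variable {n₁ n₂ n₃ m : ℕ} (P : BADMM n₁ n₂ n₃ m)

/-- `σ₀ = 2ℓ₃²/(ασ_C)`. -/
def σ0 : ℝ := 2 * P.ℓ₃ ^ 2 / (P.α * P.σC)

/-- `σ₁ = (1/2)·min(μ₁, μ₂, μ₃ − 4(ℓ_h+ℓ₃)²/(ασ_C) − 4ℓ₃²/(ασ_C))`. -/
def σ1 : ℝ :=
  (1 / 2) * min P.μ₁ (min P.μ₂
    (P.μ₃ - 4 * (P.ℓh + P.ℓ₃) ^ 2 / (P.α * P.σC) - 4 * P.ℓ₃ ^ 2 / (P.α * P.σC)))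

/-- The augmented Lagrangian of the problem, `L_α`. -/
def L (x : Eu n₁) (y : Eu n₂) (z : Eu n₃) (p : Eu m) : ℝ :=
  Lag P.f P.g P.h P.A P.B P.C P.α x y z p

/-- `L̂(x,y,z,p,ẑ) = L_α(x,y,z,p) + σ₀‖z−ẑ‖²`. -/
def Lhat (x : Eu n₁) (y : Eu n₂) (z : Eu n₃) (p : Eu m) (zh : Eu n₃) : ℝ :=
  P.L x y z p + P.σ0 * ‖z - zh‖ ^ 2

/-- `‖w^{k+1}−w^k‖²`. -/
def dw2 (k : ℕ) : ℝ :=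
  ‖P.x (k+1) - P.x k‖ ^ 2 + ‖P.y (k+1) - P.y k‖ ^ 2 +
    ‖P.z (k+1) - P.z k‖ ^ 2 + ‖P.p (k+1) - P.p k‖ ^ 2

end BADMM

/-
The `z`-update minimizes `ζ ↦ L_α(x^{k+1}, y^{k+1}, ζ, p^k) + Δ_{φ₃}(ζ, z^k)`, so its gradient
`∇h(z^{k+1}) + Cᵀ(p^k + α r) + ∇φ₃(z^{k+1}) − ∇φ₃(z^k)` vanishes at `z^{k+1}`, where
`r = Ax^{k+1} + By^{k+1} + Cz^{k+1}` and `p^k + α r = p^{k+1}`. The `z`-gradient of `L̂` at the same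
point is `∇h(z^{k+1}) + Cᵀ(p^{k+1} + α r) + 2σ₀(z^{k+1} − z^k)`; substituting `α r = p^{k+1} − p^k`
and the optimality condition gives the formula. The bound is the triangle inequality together
with the Lipschitz continuity of `∇φ₃` and `σ₀ ≥ 0`.
-/
open ContinuousLinearMap InnerProductSpace

section GradientCalculus

variable {E F : Type*} [NormedAddCommGroup E] [InnerProductSpace ℝ E] [CompleteSpace E]
  [NormedAddCommGroup F] [InnerProductSpace ℝ F] [CompleteSpace F] {f g : E → ℝ} {f' g' x : E}

theorem HasGradientAt.add (hf : HasGradientAt f f' x) (hg : HasGradientAt g g' x) :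
    HasGradientAt (fun y => f y + g y) (f' + g') x := by
  rw [hasGradientAt_iff_hasFDerivAt] at *
  rw [map_add]
  exact hf.add hg

theorem HasGradientAt.sub (hf : HasGradientAt f f' x) (hg : HasGradientAt g g' x) :
    HasGradientAt (fun y => f y - g y) (f' - g') x := by
  rw [hasGradientAt_iff_hasFDerivAt] at *
  rw [map_sub]
  exact hf.sub hg

theorem HasGradientAt.const_add (c : ℝ) (hf : HasGradientAt f f' x) :
    HasGradientAt (fun y => c + f y) f' x :=
  (hasFDerivAt_const_add_iff c).mpr hf

theorem HasGradientAt.sub_const (c : ℝ) (hf : HasGradientAt f f' x) :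
    HasGradientAt (fun y => f y - c) f' x :=
  (hasFDerivAt_sub_const_iff c).mpr hf

theorem HasGradientAt.const_mul (c : ℝ) (hf : HasGradientAt f f' x) :
    HasGradientAt (fun y => c * f y) (c • f') x := by
  rw [hasGradientAt_iff_hasFDerivAt] at *
  rw [map_smul]
  exact hf.const_mul c

theorem hasGradientAt_inner_right (a x : E) : HasGradientAt (fun y => ⟪a, y⟫) a x :=
  hasGradientAt_iff_hasFDerivAt.mpr (innerSL ℝ a).hasFDerivAt

theorem hasGradientAt_norm_sq (x : E) : HasGradientAt (fun y => ‖y‖ ^ 2) ((2 : ℝ) • x) x := by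
  rw [hasGradientAt_iff_hasFDerivAt]
  refine (hasStrictFDerivAt_norm_sq x).hasFDerivAt.congr_fderiv ?_
  ext w
  simp

theorem hasGradientAt_norm_sq_sub (a x : E) :
    HasGradientAt (fun y => ‖y - a‖ ^ 2) ((2 : ℝ) • (x - a)) x := by
  rw [hasGradientAt_iff_hasFDerivAt]
  refine ((hasFDerivAt_id x).sub_const a).norm_sq.congr_fderiv ?_
  ext w
  simp

theorem HasGradientAt.comp_const_add_clm {f : F → ℝ} {f' : F} (C : E →L[ℝ] F) (v : F) {z : E}
    (hf : HasGradientAt f f' (v + C z)) :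
    HasGradientAt (fun ζ => f (v + C ζ)) (adjoint C f') z := by
  rw [hasGradientAt_iff_hasFDerivAt] at *
  refine (hf.comp z (C.hasFDerivAt.const_add v)).congr_fderiv ?_
  ext w
  simp [adjoint_inner_left]

theorem IsLocalMin.hasGradientAt_eq_zero (hmin : IsLocalMin f x) (hf : HasGradientAt f f' x) :
    f' = 0 :=
  (toDual ℝ E).map_eq_zero_iff.mp (hmin.hasFDerivAt_eq_zero (hasGradientAt_iff_hasFDerivAt.mp hf))

end GradientCalculus

theorem hasGradientAt_Lag_z {n₁ n₂ n₃ m : ℕ} (f : Eu n₁ → ℝ) (g : Eu n₂ → ℝ) {h : Eu n₃ → ℝ}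
    {h'z : Eu n₃} (A : Eu n₁ →L[ℝ] Eu m) (B : Eu n₂ →L[ℝ] Eu m) (C : Eu n₃ →L[ℝ] Eu m)
    (α : ℝ) (x : Eu n₁) (y : Eu n₂) {z : Eu n₃} (p : Eu m) (hh : HasGradientAt h h'z z) :
    HasGradientAt (fun ζ => Lag f g h A B C α x y ζ p)
      (h'z + adjoint C (p + α • (A x + B y + C z))) z := by
  have hpenalty : HasGradientAt (fun w => ⟪p, w⟫ + α / 2 * ‖w‖ ^ 2)
      (p + α • (A x + B y + C z)) (A x + B y + C z) := by
    convert (hasGradientAt_inner_right p _).add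
      ((hasGradientAt_norm_sq _).const_mul (α / 2)) using 1
    module
  convert (hh.const_add (f x + g y)).add (hpenalty.comp_const_add_clm C (A x + B y)) using 1
  funext ζ
  simp only [Lag]
  ring

theorem hasGradientAt_Breg_left {n : ℕ} {φ : Eu n → ℝ} {φ'z : Eu n} (φ' : Eu n → Eu n)
    {z : Eu n} (a : Eu n) (hφ : HasGradientAt φ φ'z z) :
    HasGradientAt (fun ζ => Breg φ φ' ζ a) (φ'z - φ' a) z := by
  convert (hφ.sub_const (φ a)).sub ((hasGradientAt_inner_right (φ' a) z).sub_const ⟪φ' a, a⟫)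
    using 1
  funext ζ
  simp only [Breg, inner_sub_right]

namespace BADMM

variable {n₁ n₂ n₃ m : ℕ} (P : BADMM n₁ n₂ n₃ m)

theorem σ0_nonneg : 0 ≤ P.σ0 :=
  div_nonneg (by positivity) (mul_pos P.hα_pos P.hσC_pos).le

theorem smul_residual_eq (k : ℕ) :
    P.α • (P.A (P.x (k+1)) + P.B (P.y (k+1)) + P.C (P.z (k+1))) = P.p (k+1) - P.p k := by
  rw [P.hp_upd k, add_sub_cancel_left]

theorem hasGradientAt_Lhat_z (x : Eu n₁) (y : Eu n₂) (z : Eu n₃) (p : Eu m) (zh : Eu n₃) :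
    HasGradientAt (fun ζ => P.Lhat x y ζ p zh)
      (P.h' z + adjoint P.C (p + P.α • (P.A x + P.B y + P.C z)) + (2 * P.σ0) • (z - zh)) z := by
  have h := (hasGradientAt_Lag_z P.f P.g P.A P.B P.C P.α x y p (P.hgrad_h z)).add
    ((hasGradientAt_norm_sq_sub zh z).const_mul P.σ0)
  rwa [smul_smul, mul_comm] at h

theorem z_optimality (k : ℕ) :
    P.h' (P.z (k+1)) + adjoint P.C (P.p (k+1)) = P.φ₃' (P.z k) - P.φ₃' (P.z (k+1)) := by
  have hgrad := (hasGradientAt_Lag_z P.f P.g P.A P.B P.C P.α (P.x (k+1)) (P.y (k+1)) (P.p k)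
    (P.hgrad_h (P.z (k+1)))).add (hasGradientAt_Breg_left P.φ₃' (P.z k) (P.hgrad_φ₃ (P.z (k+1))))
  have hmin : IsLocalMin (fun ζ => Lag P.f P.g P.h P.A P.B P.C P.α (P.x (k+1)) (P.y (k+1)) ζ
      (P.p k) + Breg P.φ₃ P.φ₃' ζ (P.z k)) (P.z (k+1)) :=
    Eventually.of_forall (P.hz_min k)
  have hzero := hmin.hasGradientAt_eq_zero hgrad
  rw [← P.hp_upd k] at hzero
  linear_combination (norm := module) hzero

theorem norm_z_gradient_le (k : ℕ) :
    ‖P.φ₃' (P.z k) - P.φ₃' (P.z (k+1)) + adjoint P.C (P.p (k+1) - P.p k) +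
        (2 * P.σ0) • (P.z (k+1) - P.z k)‖ ≤
      (P.ℓ₃ + 2 * P.σ0) * ‖P.z (k+1) - P.z k‖ +
        ‖(adjoint P.C : Eu m →L[ℝ] Eu n₃)‖ * ‖P.p (k+1) - P.p k‖ := by
  have hlip : ‖P.φ₃' (P.z k) - P.φ₃' (P.z (k+1))‖ ≤ P.ℓ₃ * ‖P.z (k+1) - P.z k‖ := by
    simpa only [norm_sub_rev (P.z k)] using P.hlip_φ₃ (P.z k) (P.z (k+1))
  have hprox : ‖(2 * P.σ0) • (P.z (k+1) - P.z k)‖ = 2 * P.σ0 * ‖P.z (k+1) - P.z k‖ := by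
    rw [norm_smul, Real.norm_of_nonneg (by linarith [P.σ0_nonneg])]
  calc _ ≤ ‖P.φ₃' (P.z k) - P.φ₃' (P.z (k+1))‖ + ‖adjoint P.C (P.p (k+1) - P.p k)‖ +
          ‖(2 * P.σ0) • (P.z (k+1) - P.z k)‖ := norm_add₃_le
    _ ≤ _ := by
      rw [hprox]
      linarith [(adjoint P.C).le_opNorm (P.p (k+1) - P.p k)]

end BADMM

/-- the partial gradient of `L̂` in `z` at the iterates, and its norm bound. -/
theorem badmm_Lhat_z_gradient {n₁ n₂ n₃ m : ℕ} (P : BADMM n₁ n₂ n₃ m) :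
    ∀ k : ℕ,
      HasGradientAt
        (fun ζ : Eu n₃ => P.Lhat (P.x (k+1)) (P.y (k+1)) ζ (P.p (k+1)) (P.z k))
        (P.φ₃' (P.z k) - P.φ₃' (P.z (k+1)) +
          (ContinuousLinearMap.adjoint P.C) (P.p (k+1) - P.p k) +
          (2 * P.σ0) • (P.z (k+1) - P.z k))
        (P.z (k+1)) ∧
      ‖P.φ₃' (P.z k) - P.φ₃' (P.z (k+1)) +
          (ContinuousLinearMap.adjoint P.C) (P.p (k+1) - P.p k) +
          (2 * P.σ0) • (P.z (k+1) - P.z k)‖ ≤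
        (P.ℓ₃ + 2 * P.σ0) * ‖P.z (k+1) - P.z k‖ +
          ‖(ContinuousLinearMap.adjoint P.C : Eu m →L[ℝ] Eu n₃)‖ * ‖P.p (k+1) - P.p k‖ := by
  intro k
  refine ⟨?_, P.norm_z_gradient_le k⟩
  convert P.hasGradientAt_Lhat_z (P.x (k+1)) (P.y (k+1)) (P.z (k+1)) (P.p (k+1)) (P.z k) using 1
  rw [P.smul_residual_eq k, map_add, ← add_assoc, P.z_optimality k]
end
end

section
/- Let F : ℝ^n → ℝ be any function and φ : ℝ^n → ℝ be convex and differentiable, let μ > 0, and suppose that either F is μ-strongly convex or φ is μ-strongly convex. Fix x₀ ∈ ℝ^n and suppose x⁺ is a global minimizer of the map x ↦ F(x) + Δ_φ(x, x₀). Then F(x⁺) ≤ F(x₀) − (μ/2)‖x⁺ − x₀‖². -/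
open RealInnerProductSpace

noncomputable section

/-!
The Bregman distance `Δ_φ(·, x₀)` is nonnegative, vanishes at `x₀`, and differs from `φ` by an
affine function, so it inherits (strong) convexity from `φ`. A minimizer `x` of a `μ`-strongly
convex function `f` satisfies `f x + μ/2 ‖y - x‖² ≤ f y`: compare `f x` with the value of `f` at a
point of the segment `[x, y]` and let that point tend to `x`. Apply this to `F + Δ_φ(·, x₀)` at
`x⁺` when `F` is strongly convex, and to `Δ_φ(·, x₀)` at `x₀` when `φ` is.
-/

open Set Filter Topology

section NormedSpace

variable {E : Type*} [NormedAddCommGroup E] [NormedSpace ℝ E] {s : Set E} {m : ℝ} {f g : E → ℝ}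
  {x y : E}

theorem ConvexOn.add_le_of_hasFDerivAt {f' : E →L[ℝ] ℝ} (hf : ConvexOn ℝ s f) (hx : x ∈ s)
    (hy : y ∈ s) (hf' : HasFDerivAt f f' x) : f x + f' (y - x) ≤ f y := by
  have hline := hf.comp_affineMap (AffineMap.lineMap (k := ℝ) x y)
  have hderiv : HasDerivAt (f ∘ AffineMap.lineMap x y) (f' (y - x)) (0 : ℝ) := by
    refine HasFDerivAt.comp_hasDerivAt (0 : ℝ) ?_ AffineMap.hasDerivAt_lineMap
    rwa [AffineMap.lineMap_apply_zero]
  have := hline.le_slope_of_hasDerivAt (by simpa using hx) (by simpa using hy) zero_lt_one hderiv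
  simp only [slope_def_field, Function.comp_apply, AffineMap.lineMap_apply_zero,
    AffineMap.lineMap_apply_one, sub_zero, div_one] at this
  linarith

theorem StrongConvexOn.add_convexOn (hf : StrongConvexOn s m f) (hg : ConvexOn ℝ s g) :
    StrongConvexOn s m (f + g) := by
  have := hf.add hg.uniformConvexOn_zero
  rwa [add_zero] at this

theorem StrongConvexOn.add_sq_norm_sub_le_of_isMinOn (hf : StrongConvexOn s m f)
    (hmin : IsMinOn f s x) (hx : x ∈ s) (hy : y ∈ s) : f x + m / 2 * ‖y - x‖ ^ 2 ≤ f y := by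
  have hsegment : ∀ t ∈ Ioo (0 : ℝ) 1, f x + (1 - t) * (m / 2 * ‖y - x‖ ^ 2) ≤ f y := by
    rintro t ⟨ht0, ht1⟩
    have hconv := hf.2 hx hy (sub_nonneg.2 ht1.le) ht0.le (sub_add_cancel 1 t)
    have hle := hmin (hf.1 hx hy (sub_nonneg.2 ht1.le) ht0.le (sub_add_cancel 1 t))
    rw [norm_sub_rev] at hconv
    simp only [smul_eq_mul, mem_ofPred_eq] at hconv hle
    nlinarith
  have hlim : Tendsto (fun t : ℝ => f x + (1 - t) * (m / 2 * ‖y - x‖ ^ 2)) (𝓝[>] 0)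
      (𝓝 (f x + m / 2 * ‖y - x‖ ^ 2)) := by
    refine tendsto_nhdsWithin_of_tendsto_nhds (Continuous.tendsto' ?_ 0 _ ?_)
    · fun_prop
    · simp
  exact le_of_tendsto hlim (eventually_of_mem (Ioo_mem_nhdsGT zero_lt_one) hsegment)

end NormedSpace

variable {n : ℕ} {φ : Eu n → ℝ} {φ' : Eu n → Eu n} {m : ℝ}

theorem breg_nonneg (hφ : ConvexOn ℝ univ φ) {v : Eu n} (hv : HasGradientAt φ (φ' v) v)
    (u : Eu n) : 0 ≤ Breg φ φ' u v := by
  have := hφ.add_le_of_hasFDerivAt (mem_univ v) (mem_univ u) (hasGradientAt_iff_hasFDerivAt.1 hv)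
  rw [InnerProductSpace.toDual_apply_apply] at this
  rw [Breg]
  linarith

theorem StrongConvexOn.breg_left (hφ : StrongConvexOn univ m φ) (φ' : Eu n → Eu n) (v : Eu n) :
    StrongConvexOn univ m (Breg φ φ' · v) := by
  rw [strongConvexOn_iff_convex] at hφ ⊢
  have hlin : ConvexOn ℝ univ (-innerₛₗ ℝ (φ' v)) := LinearMap.convexOn _ convex_univ
  refine ((hφ.add hlin).add_const (⟪φ' v, v⟫ - φ v)).congr fun u _ => ?_
  simp only [Breg, inner_sub_right, Pi.add_apply, LinearMap.neg_apply, innerₛₗ_apply_apply]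
  ring

theorem breg_prox_descent_general {n : ℕ} (F φ : Eu n → ℝ) (φ' : Eu n → Eu n) (μ : ℝ)
    (hφ_conv : ConvexOn ℝ Set.univ φ) (hφ_grad : ∀ v, HasGradientAt φ (φ' v) v)
    (hsc : StrongConvex μ F ∨ StrongConvex μ φ)
    (x₀ xp : Eu n)
    (hmin : ∀ ξ : Eu n, F xp + Breg φ φ' xp x₀ ≤ F ξ + Breg φ φ' ξ x₀) :
    F xp ≤ F x₀ - μ / 2 * ‖xp - x₀‖ ^ 2 := by
  have hB_nonneg : ∀ u, 0 ≤ Breg φ φ' u x₀ := breg_nonneg hφ_conv (hφ_grad x₀)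
  have hB_self : Breg φ φ' x₀ x₀ = 0 := by simp [Breg]
  rcases hsc with hF | hφ
  · have hB_conv : ConvexOn ℝ univ (Breg φ φ' · x₀) :=
      strongConvexOn_zero.1 ((strongConvexOn_zero.2 hφ_conv).breg_left φ' x₀)
    have hG := (strongConvexOn_iff_convex.2 hF).add_convexOn hB_conv
    have := hG.add_sq_norm_sub_le_of_isMinOn (isMinOn_iff.2 fun ξ _ => hmin ξ) (mem_univ xp)
      (mem_univ x₀)
    simp only [Pi.add_apply, hB_self, norm_sub_rev x₀] at this
    linarith [hB_nonneg xp]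
  · have hB := (strongConvexOn_iff_convex.2 hφ).breg_left φ' x₀
    have hB_min : IsMinOn (Breg φ φ' · x₀) univ x₀ :=
      isMinOn_iff.2 fun u _ => hB_self.trans_le (hB_nonneg u)
    have := hB.add_sq_norm_sub_le_of_isMinOn hB_min (mem_univ x₀) (mem_univ xp)
    linarith [hmin x₀]

/-- sufficient decrease of a Bregman proximal step: if `x⁺` globally
minimizes `x ↦ F(x) + Δ_φ(x,x₀)` and either `F` or `φ` is `μ`-strongly convex, then
`F(x⁺) ≤ F(x₀) − (μ/2)‖x⁺−x₀‖²`. -/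
theorem breg_prox_descent {n : ℕ} (F φ : Eu n → ℝ) (φ' : Eu n → Eu n) (μ : ℝ)
    (hμ : 0 < μ)
    (hφ_conv : ConvexOn ℝ Set.univ φ) (hφ_grad : ∀ v, HasGradientAt φ (φ' v) v)
    (hsc : StrongConvex μ F ∨ StrongConvex μ φ)
    (x₀ xp : Eu n)
    (hmin : ∀ ξ : Eu n, F xp + Breg φ φ' xp x₀ ≤ F ξ + Breg φ φ' ξ x₀) :
    F xp ≤ F x₀ - μ / 2 * ‖xp - x₀‖ ^ 2 :=
  breg_prox_descent_general F φ φ' μ hφ_conv hφ_grad hsc x₀ xp hmin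
end
end

section
/- Let η > 0, σ₁ > 0, κ > 0, and let k₁ ≥ 2 be a natural number. Let (a_k), (b_k), (c_k) be sequences of nonnegative real numbers and (s_k) a nonincreasing sequence of real numbers with 0 < s_k < η for all k. Let Φ : [0, η) → ℝ be continuous with Φ(0) = 0, and suppose Φ is concave and differentiable on (0, η) with Φ′(t) > 0 for all t ∈ (0, η). Assume that for all k ≥ k₁: (i) σ₁(a_k² + b_k² + c_k²) ≤ s_k − s_{k+1}, and (ii) 1 ≤ κ·Φ′(s_k)·(a_{k−1} + b_{k−1} + c_{k−1} + c_{k−2}). Then the series ∑_{k=0}^∞ (a_k + b_k + c_k) converges (is finite). -/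
/-!
Write `u k = a k + b k + c k`. Concavity of `Φ` gives
`Φ' (s k) * (s k - s (k+1)) ≤ Δ k := Φ (s k) - Φ (s (k+1))`, so sufficient decrease and the
K–L inequality combine to `u k ^ 2 ≤ 3 (κ / σ₁) Δ k (u (k-1) + u (k-2))`, and AM–GM turns this
into `u k ≤ C Δ k + (u (k-1) + u (k-2)) / 8`. The `Δ k` telescope, and their partial sums stay
below `Φ (s k₁)` because `Φ ≥ 0` (it increases from `Φ 0 = 0`); hence each partial sum of `u` is
at most a constant plus a quarter of itself.
-/

open Finset

lemma le_add_of_sq_le_four_mul {x p q : ℝ} (hp : 0 ≤ p) (hq : 0 ≤ q)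
    (h : x ^ 2 ≤ 4 * p * q) : x ≤ p + q :=
  (le_abs_self x).trans <|
    abs_le_of_sq_le_sq (by nlinarith [sq_nonneg (p - q)]) (add_nonneg hp hq)

lemma apply_left_le_of_hasDerivAt_nonneg {f f' : ℝ → ℝ} {a b t : ℝ}
    (hf : ContinuousOn f (Set.Ico a b)) (hf' : ∀ x ∈ Set.Ioo a b, HasDerivAt f (f' x) x)
    (hf'₀ : ∀ x ∈ Set.Ioo a b, 0 ≤ f' x) (ht : t ∈ Set.Ico a b) : f a ≤ f t :=
  monotoneOn_of_hasDerivWithinAt_nonneg (convex_Ico a b) hf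
    (by simpa using fun x hx => (hf' x hx).hasDerivWithinAt) (by simpa using hf'₀)
    ⟨le_rfl, ht.1.trans_lt ht.2⟩ ht ht.1

lemma ConcaveOn.mul_sub_le_sub_of_hasDerivAt {S : Set ℝ} {f : ℝ → ℝ} {f' x y : ℝ}
    (hfc : ConcaveOn ℝ S f) (hx : x ∈ S) (hy : y ∈ S) (hxy : x ≤ y)
    (hf' : HasDerivAt f f' y) : f' * (y - x) ≤ f y - f x := by
  rcases hxy.eq_or_lt with rfl | hlt
  · simp
  · have := hfc.le_slope_of_hasDerivAt hx hy hlt hf'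
    rwa [slope_def_field, le_div_iff₀ (sub_pos.2 hlt)] at this

/-- `δ` is the decrease of the merit function, `Δ` that of its desingularized value, `g` the slope
of the desingularizing function at the current value and `v` the subgradient bound. -/
lemma add_add_le_of_sufficient_decrease_of_kl {σ κ g δ Δ v w a b c : ℝ} (hσ : 0 < σ)
    (hκ : 0 ≤ κ) (hg : 0 ≤ g) (hv : 0 ≤ v) (hvw : v ≤ w)
    (hdecr : σ * (a ^ 2 + b ^ 2 + c ^ 2) ≤ δ) (hkl : 1 ≤ κ * g * v) (hgrad : g * δ ≤ Δ) :
    a + b + c ≤ 6 * κ / σ * Δ + w / 8 := by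
  have hδ : 0 ≤ δ := (by positivity : 0 ≤ σ * (a ^ 2 + b ^ 2 + c ^ 2)).trans hdecr
  have hgδ : 0 ≤ g * δ := mul_nonneg hg hδ
  have hΔ : 0 ≤ Δ := hgδ.trans hgrad
  have key : σ * (a ^ 2 + b ^ 2 + c ^ 2) ≤ κ * w * Δ :=
    calc σ * (a ^ 2 + b ^ 2 + c ^ 2) ≤ δ := hdecr
      _ ≤ κ * g * v * δ := le_mul_of_one_le_left hδ hkl
      _ = κ * v * (g * δ) := by ring
      _ ≤ κ * w * Δ :=
          mul_le_mul (mul_le_mul_of_nonneg_left hvw hκ) hgrad hgδ (mul_nonneg hκ (hv.trans hvw))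
  refine le_add_of_sq_le_four_mul (by positivity) (by linarith) ?_
  calc (a + b + c) ^ 2 ≤ 3 * (a ^ 2 + b ^ 2 + c ^ 2) := by
        nlinarith [sq_nonneg (a - b), sq_nonneg (b - c), sq_nonneg (a - c)]
    _ ≤ 3 * (κ * w * Δ / σ) := by gcongr; rwa [le_div_iff₀ hσ, mul_comm]
    _ = 4 * (6 * κ / σ * Δ) * (w / 8) := by ring

lemma summable_of_le_add_mul_add {u d : ℕ → ℝ} {D θ : ℝ} (hu : ∀ k, 0 ≤ u k) (hθ₀ : 0 ≤ θ)
    (hθ : 2 * θ < 1) (hd : ∀ n, ∑ k ∈ range n, d k ≤ D)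
    (h : ∀ k, u (k + 2) ≤ d k + θ * (u (k + 1) + u k)) : Summable u := by
  set U : ℕ → ℝ := fun n => ∑ k ∈ range n, u k with hU
  have hU_mono : Monotone U := fun m n hmn =>
    sum_le_sum_of_subset_of_nonneg (range_subset_range.2 hmn) fun k _ _ => hu k
  have hU_bound : ∀ n, U (n + 2) ≤ u 0 + u 1 + D + 2 * θ * U (n + 2) := by
    intro n
    have hshift : ∑ k ∈ range n, u (k + 1) ≤ U (n + 2) :=
      calc ∑ k ∈ range n, u (k + 1) ≤ U (n + 1) := by
            simp only [hU, sum_range_succ' u n]; linarith [hu 0]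
        _ ≤ U (n + 2) := hU_mono (by omega)
    have hle : U n ≤ U (n + 2) := hU_mono (by omega)
    calc U (n + 2) = u 0 + u 1 + ∑ k ∈ range n, u (k + 2) := by
          simp only [hU, sum_range_succ']; ring
      _ ≤ u 0 + u 1 + ∑ k ∈ range n, (d k + θ * (u (k + 1) + u k)) := by
          gcongr with k; exact h k
      _ = u 0 + u 1 + ∑ k ∈ range n, d k + θ * (∑ k ∈ range n, u (k + 1) + U n) := by
          rw [sum_add_distrib, ← mul_sum, sum_add_distrib]; ring
      _ ≤ u 0 + u 1 + D + θ * (U (n + 2) + U (n + 2)) := by gcongr; exact hd n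
      _ = u 0 + u 1 + D + 2 * θ * U (n + 2) := by ring
  refine summable_of_sum_range_le hu (c := (u 0 + u 1 + D) / (1 - 2 * θ)) fun n => ?_
  rw [le_div_iff₀ (by linarith)]
  nlinarith [hU_bound n, hU_mono (show n ≤ n + 2 by omega)]

theorem kl_finite_length_general (η σ₁ κ : ℝ) (hσ₁ : 0 < σ₁) (hκ : 0 < κ)
    (k₁ : ℕ) (hk₁ : 2 ≤ k₁)
    (a b c s : ℕ → ℝ)
    (ha : ∀ k, 0 ≤ a k) (hb : ∀ k, 0 ≤ b k) (hc : ∀ k, 0 ≤ c k)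
    (hs_mem : ∀ k, 0 < s k ∧ s k < η)
    (Φ Φ' : ℝ → ℝ)
    (hΦ_cont : ContinuousOn Φ (Set.Ico 0 η))
    (hΦ0 : Φ 0 = 0)
    (hΦ_concave : ConcaveOn ℝ (Set.Ioo 0 η) Φ)
    (hΦ_deriv : ∀ t ∈ Set.Ioo (0:ℝ) η, HasDerivAt Φ (Φ' t) t)
    (hΦ'_pos : ∀ t ∈ Set.Ioo (0:ℝ) η, 0 < Φ' t)
    (h1 : ∀ k, k₁ ≤ k → σ₁ * (a k ^ 2 + b k ^ 2 + c k ^ 2) ≤ s k - s (k+1))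
    (h2 : ∀ k, k₁ ≤ k → 1 ≤ κ * Φ' (s k) * (a (k-1) + b (k-1) + c (k-1) + c (k-2))) :
    Summable (fun k : ℕ => a k + b k + c k) := by
  obtain ⟨j, rfl⟩ : ∃ j, k₁ = j + 2 := ⟨k₁ - 2, by omega⟩
  have hs : ∀ k, s k ∈ Set.Ioo 0 η := hs_mem
  have hΦ_nonneg : ∀ k, 0 ≤ Φ (s k) := fun k => hΦ0 ▸
    apply_left_le_of_hasDerivAt_nonneg hΦ_cont hΦ_deriv (fun t ht => (hΦ'_pos t ht).le)
      ⟨(hs k).1.le, (hs k).2⟩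
  set u : ℕ → ℝ := fun k => a k + b k + c k
  set f : ℕ → ℝ := fun k => Φ (s (k + 2 + j))
  have hstep : ∀ k, u (k + 2 + j) ≤
      6 * κ / σ₁ * (f k - f (k + 1)) + 1 / 8 * (u (k + 1 + j) + u (k + j)) := by
    intro k
    have hk : j + 2 ≤ k + 2 + j := by omega
    have hdecr := h1 _ hk
    have hkl : 1 ≤ κ * Φ' (s (k + 2 + j)) *
        (a (k + 1 + j) + b (k + 1 + j) + c (k + 1 + j) + c (k + j)) := by
      simpa only [show k + 2 + j - 1 = k + 1 + j by omega, show k + 2 + j - 2 = k + j by omega]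
        using h2 _ hk
    have hgrad := hΦ_concave.mul_sub_le_sub_of_hasDerivAt (hs (k + 2 + j + 1)) (hs (k + 2 + j))
      (sub_nonneg.1 ((by positivity : (0 : ℝ) ≤ _).trans hdecr)) (hΦ_deriv _ (hs _))
    have hbound := add_add_le_of_sufficient_decrease_of_kl hσ₁ hκ.le (hΦ'_pos _ (hs _)).le
      (by linarith [ha (k + 1 + j), hb (k + 1 + j), hc (k + 1 + j), hc (k + j)])
      (by linarith [ha (k + j), hb (k + j)] : _ ≤ u (k + 1 + j) + u (k + j)) hdecr hkl hgrad
    simp only [u, f, show k + 1 + 2 + j = k + 2 + j + 1 by omega]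
    linarith
  have hd : ∀ n, ∑ k ∈ range n, 6 * κ / σ₁ * (f k - f (k + 1)) ≤ 6 * κ / σ₁ * f 0 := by
    intro n
    rw [← mul_sum, sum_range_sub']
    exact mul_le_mul_of_nonneg_left (sub_le_self _ (hΦ_nonneg _)) (by positivity)
  exact (summable_nat_add_iff j).1 <| summable_of_le_add_mul_add
    (fun k => add_nonneg (add_nonneg (ha _) (hb _)) (hc _)) (by norm_num) (by norm_num) hd hstep

/-- the abstract finite-length argument underlying the global convergence
proof of the 3-block Bregman ADMM under the Kurdyka–Łojasiewicz inequality. -/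
theorem kl_finite_length (η σ₁ κ : ℝ) (hη : 0 < η) (hσ₁ : 0 < σ₁) (hκ : 0 < κ)
    (k₁ : ℕ) (hk₁ : 2 ≤ k₁)
    (a b c s : ℕ → ℝ)
    (ha : ∀ k, 0 ≤ a k) (hb : ∀ k, 0 ≤ b k) (hc : ∀ k, 0 ≤ c k)
    (hs_anti : ∀ k, s (k+1) ≤ s k)
    (hs_mem : ∀ k, 0 < s k ∧ s k < η)
    (Φ Φ' : ℝ → ℝ)
    (hΦ_cont : ContinuousOn Φ (Set.Ico 0 η))
    (hΦ0 : Φ 0 = 0)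
    (hΦ_concave : ConcaveOn ℝ (Set.Ioo 0 η) Φ)
    (hΦ_deriv : ∀ t ∈ Set.Ioo (0:ℝ) η, HasDerivAt Φ (Φ' t) t)
    (hΦ'_pos : ∀ t ∈ Set.Ioo (0:ℝ) η, 0 < Φ' t)
    (h1 : ∀ k, k₁ ≤ k → σ₁ * (a k ^ 2 + b k ^ 2 + c k ^ 2) ≤ s k - s (k+1))
    (h2 : ∀ k, k₁ ≤ k → 1 ≤ κ * Φ' (s k) * (a (k-1) + b (k-1) + c (k-1) + c (k-2))) :
    Summable (fun k : ℕ => a k + b k + c k) :=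
  kl_finite_length_general η σ₁ κ hσ₁ hκ k₁ hk₁ a b c s ha hb hc hs_mem Φ Φ' hΦ_cont hΦ0 hΦ_concave
    hΦ_deriv hΦ'_pos h1 h2
end
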